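/- Let F be a moduli space of polarized hyper-Kähler varieties and suppose the universal family X → F satisfies the generalized Franchetta conjecture (i.e. any cycle on X that is fiberwise homologically trivial restricts to zero on every fiber). Then for any member X of the family, the cycle class map restricted to the Q-subalgebra of CH*(X)_Q generated by the polarization line bundle and the Chern classes of T_X is injective. More generally, the cycle class map is injective on the Q-subalgebra generated by all algebraic cycles of X that are defined universally over the moduli space. -/
import Mathlib


/-!
# Statement 11

Let `F` be a moduli space of polarized hyper-Kähler varieties and suppose the universal family
`X → F` satisfies the generalized Franchetta conjecture (i.e. any cycle on the total space that
is fiberwise homologically trivial restricts to zero on every fiber).  Then for any member `X_b`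
of the family, the cycle class map restricted to the `ℚ`-subalgebra of `CH^*(X_b)_ℚ` generated
by the polarization line bundle and the Chern classes of `T_{X_b}` is injective.  More
generally, the cycle class map is injective on the `ℚ`-subalgebra generated by all algebraic
cycles of `X_b` that are defined universally over the moduli space (i.e. on the image of the
restriction map).

Chow groups are taken with rational coefficients; the data is axiomatized below.  The field
`cl_locallyConstant` records the standard fact that the fiberwise cohomology class of a
universal cycle vanishes at one point of the (connected) moduli space if and only if it
vanishes at every point.
-/

/-- The Chow-theoretic data of the universal family `X → F` of a moduli space of polarized
hyper-Kähler varieties: the rational Chow ring of the total space, the rational Chow and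
cohomology rings of every fiber, the restriction maps and fiberwise cycle class maps, the
relative polarization class and the Chern classes of the relative tangent bundle. -/
structure PolarizedHKUniversalFamily where
  /-- Points of the moduli space `F`. -/
  Base : Type
  /-- The rational Chow ring `CH^*(X)_ℚ` of the total space. -/
  CHtot : Type
  [chtotRing : CommRing CHtot]
  [chtotAlgebra : Algebra ℚ CHtot]
  /-- The rational Chow ring `CH^*(X_b)_ℚ` of the fiber over `b`. -/
  CHfib : Base → Type
  [chfibRing : ∀ b, CommRing (CHfib b)]
  [chfibAlgebra : ∀ b, Algebra ℚ (CHfib b)]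
  /-- Restriction of cycles to the fiber over `b`. -/
  restrict : ∀ b, CHtot →ₐ[ℚ] CHfib b
  /-- The rational cohomology ring of the fiber over `b`. -/
  Coh : Base → Type
  [cohRing : ∀ b, CommRing (Coh b)]
  [cohAlgebra : ∀ b, Algebra ℚ (Coh b)]
  /-- The cycle class map of the fiber over `b`. -/
  cl : ∀ b, CHfib b →ₐ[ℚ] Coh b
  /-- The class of the relative polarization line bundle. -/
  polarization : CHtot
  /-- The Chern classes `c_i` of the relative tangent bundle `T_{X/F}`. -/
  chern : ℕ → CHtot
  /-- The fiberwise cohomology class of a universal cycle vanishes at one point of the moduli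
  space if and only if it vanishes everywhere. -/
  cl_locallyConstant : ∀ (z : CHtot) (b : Base), cl b (restrict b z) = 0 →
    ∀ b', cl b' (restrict b' z) = 0

attribute [instance] PolarizedHKUniversalFamily.chtotRing
  PolarizedHKUniversalFamily.chtotAlgebra PolarizedHKUniversalFamily.chfibRing
  PolarizedHKUniversalFamily.chfibAlgebra PolarizedHKUniversalFamily.cohRing
  PolarizedHKUniversalFamily.cohAlgebra

/-- **Proposition (Franchetta implies Beauville–Voisin for universally defined cycles).**
If the universal family satisfies the generalized Franchetta conjecture, then on every member
the cycle class map is injective on the `ℚ`-subalgebra generated by the polarization and the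
Chern classes, and more generally on the `ℚ`-subalgebra of universally defined cycles (the
image of the restriction map). -/
theorem franchetta_implies_BV (D : PolarizedHKUniversalFamily)
    (franchetta : ∀ z : D.CHtot,
      (∀ b, D.cl b (D.restrict b z) = 0) → ∀ b, D.restrict b z = 0)
    (b : D.Base) :
    Set.InjOn (D.cl b)
      ((Algebra.adjoin ℚ
        (insert (D.restrict b D.polarization)
          (Set.range fun i => D.restrict b (D.chern i))) : Subalgebra ℚ (D.CHfib b)) :
            Set (D.CHfib b))
    ∧ Set.InjOn (D.cl b) (Set.range (D.restrict b)) := by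
  have hrange : Set.InjOn (D.cl b) (Set.range (D.restrict b)) := by
    rintro _ ⟨z, rfl⟩ _ ⟨z', rfl⟩ h
    have h0 : D.cl b (D.restrict b (z - z')) = 0 := by
      simp [map_sub, h]
    have := franchetta (z - z') (D.cl_locallyConstant (z - z') b h0) b
    rw [map_sub, sub_eq_zero] at this
    exact this
  refine ⟨Set.InjOn.mono ?_ hrange, hrange⟩
  intro x hx
  have hsub : Algebra.adjoin ℚ
      (insert (D.restrict b D.polarization)
        (Set.range fun i => D.restrict b (D.chern i))) ≤ (D.restrict b).range := by
    apply Algebra.adjoin_le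
    rintro _ (rfl | ⟨i, rfl⟩)
    · exact ⟨D.polarization, rfl⟩
    · exact ⟨D.chern i, rfl⟩
  exact hsub hx
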